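/- If a λ-term X βΩ-converts to a λ-term Y (full βΩ-conversion, with contractions allowed in arbitrary contexts), then λz₁…zₜ.X =ω λz₁…zₜ.Y, where z₁, …, zₜ enumerates (in a fixed order) the union of the free variables of X and Y. -/

import Mathlib

/-- Untyped λ-terms in de Bruijn representation. -/
inductive Lam : Type
  | var : ℕ → Lam
  | app : Lam → Lam → Lam
  | lam : Lam → Lam
deriving DecidableEq

namespace Lam

/-- Lift (shift) the free variables ≥ d by one. -/
def lift : ℕ → Lam → Lam
  | d, var n => if n < d then var n else var (n + 1)
  | d, app M N => app (lift d M) (lift d N)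
  | d, lam M => lam (lift (d + 1) M)

/-- Capture-avoiding substitution of N for the free variable k. -/
def subst : ℕ → Lam → Lam → Lam
  | k, N, var n => if n = k then N else if k < n then var (n - 1) else var n
  | k, N, app A B => app (subst k N A) (subst k N B)
  | k, N, lam M => lam (subst (k + 1) (lift 0 N) M)

/-- All free variables are < k. -/
def ClosedUnder : ℕ → Lam → Prop
  | k, var n => n < k
  | k, app A B => ClosedUnder k A ∧ ClosedUnder k B
  | k, lam M => ClosedUnder (k + 1) M

/-- A term is closed if it has no free variables. -/
def Closed (M : Lam) : Prop := ClosedUnder 0 M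

/-- x occurs free in the term. -/
def FreeIn : ℕ → Lam → Prop
  | x, var n => n = x
  | x, app A B => FreeIn x A ∨ FreeIn x B
  | x, lam M => FreeIn (x + 1) M

/-- The minimal number of abstractions needed to close the term. -/
def fvBound : Lam → ℕ
  | var n => n + 1
  | app A B => max (fvBound A) (fvBound B)
  | lam M => fvBound M - 1

/-- Iterated abstraction λz₁…zₙ.M. -/
def absN : ℕ → Lam → Lam
  | 0, M => M
  | n + 1, M => lam (absN n M)

/-- The λ-closure of a term: abstraction over all its free variables. -/
def close (M : Lam) : Lam := absN (fvBound M) M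

/-- One-step β-reduction (closed under arbitrary contexts). -/
inductive Beta : Lam → Lam → Prop
  | beta (U V) : Beta (app (lam U) V) (subst 0 V U)
  | appL {M M'} (N) : Beta M M' → Beta (app M N) (app M' N)
  | appR (M) {N N'} : Beta N N' → Beta (app M N) (app M N')
  | lam {M M'} : Beta M M' → Beta (lam M) (lam M')

/-- Many-step β-reduction. -/
def BetaStar : Lam → Lam → Prop := Relation.ReflTransGen Beta

/-- β-conversion. -/
def BetaConv : Lam → Lam → Prop := Relation.EqvGen Beta

def iComb : Lam := lam (var 0)
def omegaComb : Lam := lam (app (var 0) (var 0))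
def Omega : Lam := app omegaComb omegaComb
def Kstar : Lam := lam (lam (var 0))

/-- Apply a term to a list of arguments: M N₁ ⋯ Nₖ. -/
def appList : Lam → List Lam → Lam
  | M, [] => M
  | M, N :: Ns => appList (app M N) Ns

/-- A term is solvable iff its λ-closure applied to some closed terms β-converts to I. -/
def Solvable (M : Lam) : Prop :=
  ∃ Ns : List Lam, (∀ N ∈ Ns, Closed N) ∧ BetaConv (appList (close M) Ns) iComb

/-- One-step weak βΩ-reduction. -/
inductive WBO : Lam → Lam → Prop
  | wbeta (U V) : Closed (app (lam U) V) → WBO (app (lam U) V) (subst 0 V U)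
  | womega (M) : Closed M → ¬ Solvable M → M ≠ Omega → WBO M Omega
  | appL {M M'} (N) : WBO M M' → WBO (app M N) (app M' N)
  | appR (M) {N N'} : WBO N N' → WBO (app M N) (app M N')
  | lam {M M'} : WBO M M' → WBO (lam M) (lam M')

/-- Many-step weak βΩ-reduction. -/
def WBOStar : Lam → Lam → Prop := Relation.ReflTransGen WBO

/-- Weak βΩ-conversion. -/
def WBOConv : Lam → Lam → Prop := Relation.EqvGen WBO

/-- One-step full βΩ-reduction (Ω-contraction allowed on open terms,
unsolvability referring to the λ-closure). -/
inductive BO : Lam → Lam → Prop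
  | beta (U V) : BO (app (lam U) V) (subst 0 V U)
  | omega (M) : ¬ Solvable M → M ≠ Omega → BO M Omega
  | appL {M M'} (N) : BO M M' → BO (app M N) (app M' N)
  | appR (M) {N N'} : BO N N' → BO (app M N) (app M N')
  | lam {M M'} : BO M M' → BO (lam M) (lam M')

/-- Many-step full βΩ-reduction. -/
def BOStar : Lam → Lam → Prop := Relation.ReflTransGen BO

/-- Full βΩ-conversion. -/
def BOConv : Lam → Lam → Prop := Relation.EqvGen BO

/-- A term is in βΩ-normal form iff it admits no βΩ-reduction, i.e. it contains
no β-redex and no unsolvable subterm other than Ω. -/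
def BONormal (M : Lam) : Prop := ∀ N, ¬ BO M N

/-- Head weak β-reduction: contraction of the head redex
λx₁…xₙ.(λx.U)V M₁⋯Mₖ → λx₁…xₙ.([V/x]U)M₁⋯Mₖ with (λx.U)V closed. -/
inductive HeadWBeta : Lam → Lam → Prop
  | head (U V) : Closed (app (lam U) V) → HeadWBeta (app (lam U) V) (subst 0 V U)
  | app {M M'} (N) : (∀ U, M ≠ lam U) → HeadWBeta M M' → HeadWBeta (app M N) (app M' N)
  | lam {M M'} : HeadWBeta M M' → HeadWBeta (lam M) (lam M')

/-- The head variable of the term is the free variable x,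
i.e. the term has the form λy₁…yᵣ. x X₁ ⋯ Xₘ. -/
inductive HeadVar : ℕ → Lam → Prop
  | var (x) : HeadVar x (var x)
  | app {x M} (N) : (∀ U, M ≠ lam U) → HeadVar x M → HeadVar x (app M N)
  | lam {x M} : HeadVar (x + 1) M → HeadVar x (lam M)

/-- Subterm relation. -/
inductive Subterm : Lam → Lam → Prop
  | refl (M) : Subterm M M
  | appL {S M} (N) : Subterm S M → Subterm S (app M N)
  | appR (M) {S N} : Subterm S N → Subterm S (app M N)
  | lam {S M} : Subterm S M → Subterm S (lam M)

/-- A closed term is in weak βΩ head normal form iff it is unsolvable and equal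
to Ω, or solvable and without a head weak β-redex. -/
def WHnf (M : Lam) : Prop :=
  (¬ Solvable M ∧ M = Omega) ∨ (Solvable M ∧ ∀ N, ¬ HeadWBeta M N)

/-- Equality in the theory Hω. -/
inductive HOmega : Lam → Lam → Prop
  | refl (M) : Closed M → HOmega M M
  | wbetaL (U N) : Closed (app (lam U) N) → HOmega (app (lam U) N) (subst 0 N U)
  | wbetaR (U N) : Closed (app (lam U) N) → HOmega (subst 0 N U) (app (lam U) N)
  | unsolvL (M) : Closed M → ¬ Solvable M → HOmega M Omega
  | unsolvR (M) : Closed M → ¬ Solvable M → HOmega Omega M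
  | leibnitz (X Y M N) : ClosedUnder 1 X → ClosedUnder 1 Y → Closed M → Closed N →
      HOmega (subst 0 M X) (subst 0 M Y) → HOmega M N →
      HOmega (subst 0 N X) (subst 0 N Y)
  | omega_rule (P Q) : Closed P → Closed Q →
      (∀ M, Closed M → HOmega (app P M) (app Q M)) → HOmega P Q

/-- The n-fold application fⁿ z in the Church numeral. -/
def churchBody : ℕ → Lam
  | 0 => var 0
  | n + 1 => app (var 1) (churchBody n)

/-- The n-th Church numeral. -/
def church (n : ℕ) : Lam := lam (lam (churchBody n))


/- ===== auxiliary lemmas ===== -/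

lemma closedUnder_mono : ∀ {M : Lam} {k k' : ℕ}, k ≤ k' → ClosedUnder k M → ClosedUnder k' M := by
  intro M
  induction M with
  | var n => intro k k' h hc; exact lt_of_lt_of_le hc h
  | app A B ihA ihB => intro k k' h hc; exact ⟨ihA h hc.1, ihB h hc.2⟩
  | lam M ih => intro k k' h hc; exact ih (Nat.succ_le_succ h) hc

lemma lift_closed : ∀ {M : Lam} {d : ℕ}, ClosedUnder d M → lift d M = M := by
  intro M
  induction M with
  | var n => intro d hc; have h : n < d := hc; simp [lift, h]
  | app A B ihA ihB => intro d hc; simp [lift, ihA hc.1, ihB hc.2]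
  | lam M ih => intro d hc; simp [lift, ih hc]

lemma subst_closed : ∀ {M : Lam} {k : ℕ} {N : Lam}, ClosedUnder k M → subst k N M = M := by
  intro M
  induction M with
  | var n =>
      intro k N hc
      have h0 : n < k := hc
      have h1 : n ≠ k := by omega
      have h2 : ¬ k < n := by omega
      simp [subst, h1, h2]
  | app A B ihA ihB => intro k N hc; simp [subst, ihA hc.1, ihB hc.2]
  | lam M ih => intro k N hc; simp [subst, ih hc]

lemma closedUnder_lift : ∀ {M : Lam} {k d : ℕ}, d ≤ k → ClosedUnder k M → ClosedUnder (k+1) (lift d M) := by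
  intro M
  induction M with
  | var n =>
      intro k d hd hc
      have h0 : n < k := hc
      by_cases h : n < d
      · simp only [lift, h, if_true]; exact (show n < k + 1 by omega)
      · simp only [lift, h, if_false]; exact (show n + 1 < k + 1 by omega)
  | app A B ihA ihB => intro k d hd hc; exact ⟨ihA hd hc.1, ihB hd hc.2⟩
  | lam M ih => intro k d hd hc; exact ih (Nat.succ_le_succ hd) hc

lemma closedUnder_subst : ∀ {U : Lam} {k : ℕ} {N : Lam},
    ClosedUnder (k+1) U → ClosedUnder k N → ClosedUnder k (subst k N U) := by
  intro U
  induction U with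
  | var n =>
      intro k N hU hN
      have h0 : n < k + 1 := hU
      by_cases h : n = k
      · simp only [subst, h, if_true, if_pos rfl]; exact hN
      · have h2 : ¬ k < n := by omega
        simp only [subst, h, if_false, h2]
        exact (show n < k by omega)
  | app A B ihA ihB => intro k N hU hN; exact ⟨ihA hU.1 hN, ihB hU.2 hN⟩
  | lam M ih =>
      intro k N hU hN
      exact ih hU (closedUnder_lift (Nat.zero_le k) hN)

/-- Simultaneous substitution of closed terms for free variables ≥ j. -/
def inst (j : ℕ) (σ : ℕ → Lam) : Lam → Lam
  | var n => if n < j then var n else σ (n - j)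
  | app A B => app (inst j σ A) (inst j σ B)
  | lam M => lam (inst (j+1) σ M)

def scons (P : Lam) (σ : ℕ → Lam) : ℕ → Lam
  | 0 => P
  | n+1 => σ n

lemma scons_closed {P : Lam} {σ : ℕ → Lam} (hP : Closed P) (hσ : ∀ n, Closed (σ n)) :
    ∀ n, Closed (scons P σ n) := by
  intro n; cases n with
  | zero => exact hP
  | succ n => exact hσ n

lemma inst_closedUnder {σ : ℕ → Lam} (hσ : ∀ n, Closed (σ n)) :
    ∀ (M : Lam) (j : ℕ), ClosedUnder j (inst j σ M) := by
  intro M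
  induction M with
  | var n =>
      intro j
      by_cases h : n < j
      · simp only [inst, h, if_true]; exact h
      · simp only [inst, h, if_false]
        exact closedUnder_mono (Nat.zero_le j) (hσ (n - j))
  | app A B ihA ihB => intro j; exact ⟨ihA j, ihB j⟩
  | lam M ih => intro j; exact ih (j+1)

lemma inst_of_closed {σ : ℕ → Lam} :
    ∀ {M : Lam} {j : ℕ}, ClosedUnder j M → inst j σ M = M := by
  intro M
  induction M with
  | var n => intro j hc; have h : n < j := hc; simp [inst, h]
  | app A B ihA ihB => intro j hc; simp [inst, ihA hc.1, ihB hc.2]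
  | lam M ih => intro j hc; simp [inst, ih hc]

lemma subst_inst {σ : ℕ → Lam} (hσ : ∀ n, Closed (σ n)) {P : Lam} (hP : Closed P) :
    ∀ (M : Lam) (j : ℕ), subst j P (inst (j+1) σ M) = inst j (scons P σ) M := by
  intro M
  induction M with
  | var n =>
      intro j
      rcases lt_trichotomy n j with h | h | h
      · have h1 : n < j + 1 := by omega
        have h2 : n ≠ j := by omega
        have h3 : ¬ j < n := by omega
        simp [inst, h, h1, subst, h2, h3]
      · subst h
        simp [inst, subst, scons]
      · have h1 : ¬ n < j + 1 := by omega
        have h2 : ¬ n < j := by omega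
        have h3 : n - j = (n - (j+1)) + 1 := by omega
        rw [inst]
        simp only [h1, if_false]
        rw [subst_closed (closedUnder_mono (Nat.zero_le j) (hσ _))]
        rw [inst]
        simp only [h2, if_false, h3, scons]
  | app A B ihA ihB => intro j; simp [inst, subst, ihA, ihB]
  | lam M ih =>
      intro j
      simp [inst, subst, lift_closed hP, ih]

lemma lift_inst {σ : ℕ → Lam} (hσ : ∀ n, Closed (σ n)) :
    ∀ (M : Lam) (d j : ℕ), d ≤ j → lift d (inst j σ M) = inst (j+1) σ (lift d M) := by
  intro M
  induction M with
  | var n =>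
      intro d j hd
      rcases Nat.lt_or_ge n d with h | h
      · have h1 : n < j := by omega
        have h2 : n < j + 1 := by omega
        simp [inst, lift, h, h1, h2]
      · rcases Nat.lt_or_ge n j with h1 | h1
        · have h2 : ¬ n < d := by omega
          have h3 : n + 1 < j + 1 := by omega
          simp [inst, lift, h1, h2, h3]
        · have h2 : ¬ n < d := by omega
          have h3 : ¬ n < j := by omega
          have h4 : ¬ n + 1 < j + 1 := by omega
          have h5 : n + 1 - (j + 1) = n - j := by omega
          rw [inst]
          simp only [h3, if_false]
          rw [lift_closed (closedUnder_mono (Nat.zero_le d) (hσ _))]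
          rw [lift]
          simp only [h2, if_false]
          rw [inst]
          simp only [h4, if_false, h5]
  | app A B ihA ihB => intro d j hd; simp [inst, lift, ihA _ _ hd, ihB _ _ hd]
  | lam M ih => intro d j hd; simp [inst, lift, ih _ _ (Nat.succ_le_succ hd)]

lemma inst_subst {σ : ℕ → Lam} (hσ : ∀ n, Closed (σ n)) :
    ∀ (U V : Lam) (j : ℕ), inst j σ (subst j V U) = subst j (inst j σ V) (inst (j+1) σ U) := by
  intro U
  induction U with
  | var n =>
      intro V j
      rcases lt_trichotomy n j with h | h | h
      · have h1 : n ≠ j := by omega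
        have h2 : ¬ j < n := by omega
        have h3 : n < j + 1 := by omega
        simp [subst, inst, h, h1, h2, h3]
      · subst h
        simp [subst, inst]
      · have h1 : n ≠ j := by omega
        have h2 : j < n := by omega
        have h3 : ¬ n < j + 1 := by omega
        rw [subst]
        simp only [h1, if_false, h2, if_true]
        rw [inst]
        have h4 : ¬ n - 1 < j := by omega
        simp only [h4, if_false]
        rw [inst]
        simp only [h3, if_false]
        rw [subst_closed (closedUnder_mono (Nat.zero_le j) (hσ _))]
        congr 1
        omega
  | app A B ihA ihB => intro V j; simp [subst, inst, ihA, ihB]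
  | lam M ih =>
      intro V j
      rw [subst, inst, inst, subst]
      rw [ih (lift 0 V) (j+1)]
      rw [lift_inst hσ V 0 j (Nat.zero_le j)]

def insAt (k : ℕ) (P : Lam) (σ : ℕ → Lam) : ℕ → Lam :=
  fun n => if n < k then σ n else if n = k then P else σ (n - 1)

lemma insAt_closed {k : ℕ} {P : Lam} {σ : ℕ → Lam} (hP : Closed P) (hσ : ∀ n, Closed (σ n)) :
    ∀ n, Closed (insAt k P σ n) := by
  intro n; unfold insAt
  by_cases h1 : n < k
  · simp [h1]; exact hσ n
  · by_cases h2 : n = k <;> simp [h1, h2]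
    · exact hP
    · exact hσ _

lemma inst_subst_ins {σ : ℕ → Lam} (hσ : ∀ n, Closed (σ n)) {P : Lam} (hP : Closed P) (k : ℕ) :
    ∀ (M : Lam) (j : ℕ), ClosedUnder (j+k+1) M →
      inst j σ (subst (j+k) P M) = inst j (insAt k P σ) M := by
  intro M
  induction M with
  | var n =>
      intro j hc
      have hc' : n < j + k + 1 := hc
      rcases lt_trichotomy n (j+k) with h | h | h
      · have h1 : n ≠ j + k := by omega
        have h2 : ¬ j + k < n := by omega
        rw [subst]; simp only [h1, if_false, h2, if_false]
        rcases Nat.lt_or_ge n j with h3 | h3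
        · simp [inst, h3]
        · have h4 : ¬ n < j := by omega
          have h5 : n - j < k := by omega
          simp [inst, h4, insAt, h5]
      · subst h
        have e : subst (j+k) P (var (j+k)) = P := by simp [subst]
        rw [e, inst_of_closed (closedUnder_mono (Nat.zero_le j) hP)]
        have h4 : ¬ j + k < j := by omega
        have h5 : j + k - j = k := by omega
        simp [inst, h4, insAt, h5]
      · omega
  | app A B ihA ihB => intro j hc; simp [subst, inst, ihA j hc.1, ihB j hc.2]
  | lam M ih =>
      intro j hc
      rw [subst, inst, inst, lift_closed (closedUnder_mono (Nat.zero_le 0) hP)]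
      have : j + k + 1 = (j + 1) + k := by omega
      rw [this]
      rw [ih (j+1) (by have := hc; exact closedUnder_mono (by omega) (show ClosedUnder (j+k+1+1) M from this))]

lemma subst_absN {N : Lam} (hN : Closed N) :
    ∀ (k j : ℕ) (M : Lam), subst j N (absN k M) = absN k (subst (j+k) N M) := by
  intro k
  induction k with
  | zero => intro j M; simp [absN]
  | succ k ih =>
      intro j M
      rw [absN, subst, lift_closed (closedUnder_mono (Nat.zero_le 0) hN), ih (j+1) M, absN]
      have e : j + 1 + k = j + (k+1) := by omega
      rw [e]

lemma closedUnder_absN : ∀ (k : ℕ) {j : ℕ} {M : Lam}, ClosedUnder (j+k) M → ClosedUnder j (absN k M) := by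
  intro k
  induction k with
  | zero => intro j M h; exact h
  | succ k ih =>
      intro j M h
      show ClosedUnder (j+1) (absN k M)
      have h' : ClosedUnder (j + 1 + k) M := by
        have e : j + 1 + k = j + (k+1) := by omega
        rw [e]; exact h
      exact ih h'

lemma fvBound_le : ∀ {M : Lam} {k : ℕ}, ClosedUnder k M → fvBound M ≤ k := by
  intro M
  induction M with
  | var n => intro k h; exact h
  | app A B ihA ihB => intro k h; exact max_le (ihA h.1) (ihB h.2)
  | lam M ih =>
      intro k h
      have h' : ClosedUnder (k+1) M := h
      have := ih h'
      show fvBound M - 1 ≤ k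
      omega

lemma closedUnder_fvBound : ∀ (M : Lam), ClosedUnder (fvBound M) M := by
  intro M
  induction M with
  | var n => simp [fvBound, ClosedUnder]
  | app A B ihA ihB =>
      exact ⟨closedUnder_mono (le_max_left _ _) ihA, closedUnder_mono (le_max_right _ _) ihB⟩
  | lam M ih =>
      show ClosedUnder (fvBound M - 1 + 1) M
      exact closedUnder_mono (by omega) ih

/- ===== β-reduction lemmas and solvability under instantiation ===== -/

lemma betaStar_appL {M M' : Lam} (N : Lam) (h : BetaStar M M') :
    BetaStar (app M N) (app M' N) :=
  Relation.ReflTransGen.lift (fun X => app X N) (fun _ _ hb => Beta.appL N hb) _ _ h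

lemma betaStar_appList {Ns : List Lam} : ∀ {M M' : Lam}, BetaStar M M' →
    BetaStar (appList M Ns) (appList M' Ns) := by
  induction Ns with
  | nil => intro M M' h; exact h
  | cons N Ns ih => intro M M' h; exact ih (betaStar_appL N h)

lemma appList_append (as bs : List Lam) : ∀ M : Lam, appList M (as ++ bs) = appList (appList M as) bs := by
  induction as with
  | nil => intro M; rfl
  | cons a as ih => intro M; simp [appList, ih]

lemma betaStar_conv {M N : Lam} (h : BetaStar M N) : BetaConv M N := by
  induction h with
  | refl => exact Relation.EqvGen.refl M
  | tail _ hb ih => exact Relation.EqvGen.trans _ _ _ ih (Relation.EqvGen.rel _ _ hb)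

/-- The list [σ (k-1), …, σ 0]. -/
def argsList (σ : ℕ → Lam) : ℕ → List Lam
  | 0 => []
  | k+1 => σ k :: argsList σ k

lemma argsList_closed {σ : ℕ → Lam} (hσ : ∀ n, Closed (σ n)) :
    ∀ k, ∀ N ∈ argsList σ k, Closed N := by
  intro k
  induction k with
  | zero => intro N hN; simp [argsList] at hN
  | succ k ih =>
      intro N hN
      rcases List.mem_cons.mp hN with h | h
      · subst h; exact hσ k
      · exact ih N h

lemma inst_subst_self {σ : ℕ → Lam} (hσ : ∀ n, Closed (σ n)) :
    ∀ (M : Lam) (j k : ℕ), ClosedUnder (j+k+1) M →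
      inst j σ (subst (j+k) (σ k) M) = inst j σ M := by
  intro M
  induction M with
  | var n =>
      intro j k hc
      have hc' : n < j + k + 1 := hc
      rcases lt_trichotomy n (j+k) with h | h | h
      · have h1 : n ≠ j + k := by omega
        have h2 : ¬ j + k < n := by omega
        simp [subst, h1, h2]
      · subst h
        have e : subst (j+k) (σ k) (var (j+k)) = σ k := by simp [subst]
        rw [e, inst_of_closed (closedUnder_mono (Nat.zero_le j) (hσ k))]
        have h4 : ¬ j + k < j := by omega
        have h5 : j + k - j = k := by omega
        simp [inst, h4, h5]
      · omega
  | app A B ihA ihB => intro j k hc; simp [subst, inst, ihA j k hc.1, ihB j k hc.2]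
  | lam M ih =>
      intro j k hc
      rw [subst, inst, inst, lift_closed (closedUnder_mono (Nat.zero_le 0) (hσ k))]
      have hc' : ClosedUnder ((j+1)+k+1) M := by
        have e : j + 1 + k + 1 = j + k + 1 + 1 := by omega
        rw [e]; exact hc
      rw [show j + k + 1 = j + 1 + k by omega, ih (j+1) k hc']

lemma spine_red {σ : ℕ → Lam} (hσ : ∀ n, Closed (σ n)) :
    ∀ (k : ℕ) (M : Lam), ClosedUnder k M →
      BetaStar (appList (absN k M) (argsList σ k)) (inst 0 σ M) := by
  intro k
  induction k with
  | zero =>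
      intro M hM
      rw [show argsList σ 0 = [] from rfl]
      rw [inst_of_closed hM]
      exact Relation.ReflTransGen.refl
  | succ k ih =>
      intro M hM
      rw [show argsList σ (k+1) = σ k :: argsList σ k from rfl]
      rw [show absN (k+1) M = lam (absN k M) from rfl]
      rw [show appList (lam (absN k M)) (σ k :: argsList σ k)
            = appList (app (lam (absN k M)) (σ k)) (argsList σ k) from rfl]
      have step : Beta (app (lam (absN k M)) (σ k)) (subst 0 (σ k) (absN k M)) :=
        Beta.beta _ _
      have e1 : subst 0 (σ k) (absN k M) = absN k (subst k (σ k) M) := by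
        rw [subst_absN (hσ k) k 0 M]; simp
      have hM' : ClosedUnder k (subst k (σ k) M) :=
        closedUnder_subst hM (closedUnder_mono (Nat.zero_le k) (hσ k))
      have e2 : inst 0 σ (subst k (σ k) M) = inst 0 σ M := by
        have := inst_subst_self hσ M 0 k (by simpa using hM)
        simpa using this
      have h1 : BetaStar (appList (app (lam (absN k M)) (σ k)) (argsList σ k))
          (appList (subst 0 (σ k) (absN k M)) (argsList σ k)) :=
        betaStar_appList (Relation.ReflTransGen.single step)
      have h2 : BetaStar (appList (subst 0 (σ k) (absN k M)) (argsList σ k)) (inst 0 σ M) := by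
        rw [e1]
        have := ih (subst k (σ k) M) hM'
        rw [e2] at this
        exact this
      exact Relation.ReflTransGen.trans h1 h2

lemma solvable_of_inst {σ : ℕ → Lam} (hσ : ∀ n, Closed (σ n)) {M : Lam}
    (h : Solvable (inst 0 σ M)) : Solvable M := by
  obtain ⟨Ps, hPs, hconv⟩ := h
  have hcl : Closed (inst 0 σ M) := inst_closedUnder hσ M 0
  have hfv : fvBound (inst 0 σ M) = 0 := Nat.le_zero.mp (fvBound_le hcl)
  have hclose : close (inst 0 σ M) = inst 0 σ M := by
    rw [close, hfv]; rfl
  rw [hclose] at hconv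
  refine ⟨argsList σ (fvBound M) ++ Ps, ?_, ?_⟩
  · intro N hN
    rcases List.mem_append.mp hN with h | h
    · exact argsList_closed hσ _ N h
    · exact hPs N h
  · rw [close, appList_append]
    have hred : BetaStar (appList (absN (fvBound M) M) (argsList σ (fvBound M))) (inst 0 σ M) :=
      spine_red hσ _ M (closedUnder_fvBound M)
    have : BetaStar (appList (appList (absN (fvBound M) M) (argsList σ (fvBound M))) Ps)
        (appList (inst 0 σ M) Ps) := betaStar_appList hred
    exact Relation.EqvGen.trans _ _ _ (betaStar_conv this) hconv

/- ===== Hω lemmas ===== -/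

lemma omega_closed : Closed Omega := by
  show ClosedUnder 0 (app omegaComb omegaComb)
  refine ⟨?_, ?_⟩ <;>
  · show ClosedUnder 1 (app (var 0) (var 0))
    exact ⟨Nat.zero_lt_one, Nat.zero_lt_one⟩

lemma iComb_closed : Closed iComb := by
  show ClosedUnder 1 (var 0); exact Nat.zero_lt_one

lemma homega_closed : ∀ {M N : Lam}, HOmega M N → Closed M ∧ Closed N := by
  intro M N h
  induction h with
  | refl M hM => exact ⟨hM, hM⟩
  | wbetaL U N hc => exact ⟨hc, closedUnder_subst hc.1 hc.2⟩
  | wbetaR U N hc => exact ⟨closedUnder_subst hc.1 hc.2, hc⟩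
  | unsolvL M hM _ => exact ⟨hM, omega_closed⟩
  | unsolvR M hM _ => exact ⟨omega_closed, hM⟩
  | leibnitz X Y M N hX hY hM hN _ _ _ _ =>
      exact ⟨closedUnder_subst hX hN, closedUnder_subst hY hN⟩
  | omega_rule P Q hP hQ _ _ => exact ⟨hP, hQ⟩

lemma homega_symm : ∀ {M N : Lam}, HOmega M N → HOmega N M := by
  intro M N h
  induction h with
  | refl M hM => exact HOmega.refl M hM
  | wbetaL U N hc => exact HOmega.wbetaR U N hc
  | wbetaR U N hc => exact HOmega.wbetaL U N hc
  | unsolvL M hM hs => exact HOmega.unsolvR M hM hs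
  | unsolvR M hM hs => exact HOmega.unsolvL M hM hs
  | leibnitz X Y M N hX hY hM hN h1 h2 ih1 _ =>
      exact HOmega.leibnitz Y X M N hY hX hM hN ih1 h2
  | omega_rule P Q hP hQ h ih =>
      exact HOmega.omega_rule Q P hQ hP (fun M hM => ih M hM)

lemma homega_trans : ∀ {M N P : Lam}, HOmega M N → HOmega N P → HOmega M P := by
  intro M N P h1 h2
  have hM : Closed M := (homega_closed h1).1
  have hN : Closed N := (homega_closed h1).2
  have hP : Closed P := (homega_closed h2).2
  have key := HOmega.leibnitz M (var 0) N P
    (closedUnder_mono (Nat.zero_le 1) hM)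
    (Nat.zero_lt_one) hN hP
  rw [subst_closed hM, subst_closed hM] at key
  have e : subst 0 N (var 0) = N := by simp [subst]
  have e' : subst 0 P (var 0) = P := by simp [subst]
  rw [e, e'] at key
  exact key h1 h2

lemma homega_appL {M N P : Lam} (hP : Closed P) (h : HOmega M N) :
    HOmega (app M P) (app N P) := by
  have hM : Closed M := (homega_closed h).1
  have hN : Closed N := (homega_closed h).2
  have key := HOmega.leibnitz (app M P) (app (var 0) P) M N
    (⟨closedUnder_mono (Nat.zero_le 1) hM, closedUnder_mono (Nat.zero_le 1) hP⟩ :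
      ClosedUnder 1 (app M P))
    (⟨Nat.zero_lt_one, closedUnder_mono (Nat.zero_le 1) hP⟩ : ClosedUnder 1 (app (var 0) P))
    hM hN
  have e1 : ∀ Q : Lam, subst 0 Q (app M P) = app M P := by
    intro Q; show app (subst 0 Q M) (subst 0 Q P) = app M P
    rw [subst_closed hM, subst_closed hP]
  have e2 : ∀ Q : Lam, subst 0 Q (app (var 0) P) = app Q P := by
    intro Q; show app (subst 0 Q (var 0)) (subst 0 Q P) = app Q P
    rw [subst_closed hP]; simp [subst]
  rw [e1 M, e2 M, e1 N, e2 N] at key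
  exact key (HOmega.refl _ ⟨hM, hP⟩) h

lemma homega_appR {M N P : Lam} (hP : Closed P) (h : HOmega M N) :
    HOmega (app P M) (app P N) := by
  have hM : Closed M := (homega_closed h).1
  have hN : Closed N := (homega_closed h).2
  have key := HOmega.leibnitz (app P M) (app P (var 0)) M N
    (⟨closedUnder_mono (Nat.zero_le 1) hP, closedUnder_mono (Nat.zero_le 1) hM⟩ :
      ClosedUnder 1 (app P M))
    (⟨closedUnder_mono (Nat.zero_le 1) hP, Nat.zero_lt_one⟩ : ClosedUnder 1 (app P (var 0)))
    hM hN
  have e1 : ∀ Q : Lam, subst 0 Q (app P M) = app P M := by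
    intro Q; show app (subst 0 Q P) (subst 0 Q M) = app P M
    rw [subst_closed hM, subst_closed hP]
  have e2 : ∀ Q : Lam, subst 0 Q (app P (var 0)) = app P Q := by
    intro Q; show app (subst 0 Q P) (subst 0 Q (var 0)) = app P Q
    rw [subst_closed hP]; simp [subst]
  rw [e1 M, e2 M, e1 N, e2 N] at key
  exact key (HOmega.refl _ ⟨hP, hM⟩) h

lemma homega_app {M N P Q : Lam} (h1 : HOmega M N) (h2 : HOmega P Q) :
    HOmega (app M P) (app N Q) :=
  homega_trans (homega_appL (homega_closed h2).1 h1)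
    (homega_appR (homega_closed h1).2 h2)

/- ===== main induction ===== -/

lemma bo_inst : ∀ {X Y : Lam}, BO X Y → ∀ (σ : ℕ → Lam), (∀ n, Closed (σ n)) →
    HOmega (inst 0 σ X) (inst 0 σ Y) := by
  intro X Y h
  induction h with
  | beta U V =>
      intro σ hσ
      have e1 : inst 0 σ (app (lam U) V) = app (lam (inst 1 σ U)) (inst 0 σ V) := rfl
      have e2 : inst 0 σ (subst 0 V U) = subst 0 (inst 0 σ V) (inst 1 σ U) := by
        have := inst_subst hσ U V 0
        simpa using this
      rw [e1, e2]
      exact HOmega.wbetaL _ _ ⟨inst_closedUnder hσ U 1, inst_closedUnder hσ V 0⟩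
  | omega M hs _ =>
      intro σ hσ
      have eΩ : inst 0 σ Omega = Omega := inst_of_closed omega_closed
      rw [eΩ]
      by_cases h : inst 0 σ M = Omega
      · rw [h]; exact HOmega.refl _ omega_closed
      · exact HOmega.unsolvL _ (inst_closedUnder hσ M 0)
          (fun hsol => hs (solvable_of_inst hσ hsol))
  | appL N _ ih =>
      intro σ hσ
      exact homega_appL (inst_closedUnder hσ N 0) (ih σ hσ)
  | appR M _ ih =>
      intro σ hσ
      exact homega_appR (inst_closedUnder hσ M 0) (ih σ hσ)
  | lam hMM ih =>
      intro σ hσ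
      rename_i M M'
      show HOmega (lam (inst 1 σ M)) (lam (inst 1 σ M'))
      have hc1 : Closed (lam (inst 1 σ M)) := inst_closedUnder hσ M 1
      have hc2 : Closed (lam (inst 1 σ M')) := inst_closedUnder hσ M' 1
      apply HOmega.omega_rule _ _ hc1 hc2
      intro P hP
      have hcons : ∀ n, Closed (scons P σ n) := scons_closed hP hσ
      have s1 : HOmega (app (lam (inst 1 σ M)) P) (subst 0 P (inst 1 σ M)) :=
        HOmega.wbetaL _ _ ⟨hc1, hP⟩
      have s3 : HOmega (subst 0 P (inst 1 σ M')) (app (lam (inst 1 σ M')) P) :=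
        HOmega.wbetaR _ _ ⟨hc2, hP⟩
      have e : subst 0 P (inst 1 σ M) = inst 0 (scons P σ) M := subst_inst hσ hP M 0
      have e' : subst 0 P (inst 1 σ M') = inst 0 (scons P σ) M' := subst_inst hσ hP M' 0
      rw [e] at s1; rw [e'] at s3
      exact homega_trans s1 (homega_trans (ih (scons P σ) hcons) s3)

lemma boconv_inst : ∀ {X Y : Lam}, BOConv X Y → ∀ (σ : ℕ → Lam), (∀ n, Closed (σ n)) →
    HOmega (inst 0 σ X) (inst 0 σ Y) := by
  intro X Y h
  induction h with
  | rel _ _ hb => exact bo_inst hb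
  | refl Z => intro σ hσ; exact HOmega.refl _ (inst_closedUnder hσ Z 0)
  | symm _ _ _ ih => intro σ hσ; exact homega_symm (ih σ hσ)
  | trans _ _ _ _ _ ih1 ih2 => intro σ hσ; exact homega_trans (ih1 σ hσ) (ih2 σ hσ)

lemma homega_absN : ∀ (t : ℕ) (X Y : Lam),
    (∀ σ : ℕ → Lam, (∀ n, Closed (σ n)) → HOmega (inst 0 σ X) (inst 0 σ Y)) →
    ClosedUnder t X → ClosedUnder t Y → HOmega (absN t X) (absN t Y) := by
  intro t
  induction t with
  | zero =>
      intro X Y h hX hY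
      have := h (fun _ => iComb) (fun _ => iComb_closed)
      rwa [inst_of_closed hX, inst_of_closed hY] at this
  | succ t ih =>
      intro X Y h hX hY
      show HOmega (lam (absN t X)) (lam (absN t Y))
      have hcX : Closed (lam (absN t X)) :=
        closedUnder_absN t (by simpa using closedUnder_mono (by omega) hX)
      have hcY : Closed (lam (absN t Y)) :=
        closedUnder_absN t (by simpa using closedUnder_mono (by omega) hY)
      apply HOmega.omega_rule _ _ hcX hcY
      intro P hP
      have s1 : HOmega (app (lam (absN t X)) P) (subst 0 P (absN t X)) :=
        HOmega.wbetaL _ _ ⟨hcX, hP⟩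
      have s3 : HOmega (subst 0 P (absN t Y)) (app (lam (absN t Y)) P) :=
        HOmega.wbetaR _ _ ⟨hcY, hP⟩
      have eX : subst 0 P (absN t X) = absN t (subst t P X) := by
        rw [subst_absN hP t 0 X]; simp
      have eY : subst 0 P (absN t Y) = absN t (subst t P Y) := by
        rw [subst_absN hP t 0 Y]; simp
      rw [eX] at s1; rw [eY] at s3
      have mid : HOmega (absN t (subst t P X)) (absN t (subst t P Y)) := by
        apply ih
        · intro σ hσ
          have rX : inst 0 σ (subst t P X) = inst 0 (insAt t P σ) X := by
            have := inst_subst_ins hσ hP t X 0 (by simpa using hX)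
            simpa using this
          have rY : inst 0 σ (subst t P Y) = inst 0 (insAt t P σ) Y := by
            have := inst_subst_ins hσ hP t Y 0 (by simpa using hY)
            simpa using this
          rw [rX, rY]
          exact h _ (insAt_closed hP hσ)
        · exact closedUnder_subst hX (closedUnder_mono (Nat.zero_le t) hP)
        · exact closedUnder_subst hY (closedUnder_mono (Nat.zero_le t) hP)
      exact homega_trans s1 (homega_trans mid s3)

/-- If X βΩ-converts to Y then the λ-closures of X and Y (abstracting, in order,
over all the free variables of X or Y) are Hω-equal. -/
theorem boconv_closure_homega (X Y : Lam) (h : BOConv X Y) :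
    HOmega (absN (max (fvBound X) (fvBound Y)) X)
           (absN (max (fvBound X) (fvBound Y)) Y) := by
  apply homega_absN _ _ _ (boconv_inst h)
  · exact closedUnder_mono (le_max_left _ _) (closedUnder_fvBound X)
  · exact closedUnder_mono (le_max_right _ _) (closedUnder_fvBound Y)

end Lam
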